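/- arXiv:2205.15497 — 5 statements merged into one kernel-verified Lean document; each statement's English description precedes it below -/
import Mathlib

section
/- Let T : F → E be a linear map between topological vector spaces, let N = T⁻¹({0}) be its kernel, φ : F → F/N the quotient map, and T̃ : F/N → E the induced linear map with T = T̃ ∘ φ. Then the graph of T is closed in F × E if and only if the graph of T̃ is closed in (F/N) × E. -/
-- Openness of `q` is what makes `q × id` a quotient map; for a mere quotient map this can fail.
theorem IsOpenQuotientMap.isClosed_graph_comp_iff {X Y Z : Type*} [TopologicalSpace X]
    [TopologicalSpace Y] [TopologicalSpace Z] {q : X → Y} (hq : IsOpenQuotientMap q)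
    (f : Y → Z) :
    IsClosed {p : X × Z | f (q p.1) = p.2} ↔ IsClosed {p : Y × Z | f p.1 = p.2} :=
  (hq.prodMap IsOpenQuotientMap.id).isQuotientMap.isClosed_preimage (s := {p | f p.1 = p.2})

theorem valdivia_stmt2_general {F E : Type*}
    [AddCommGroup F] [Module ℝ F] [TopologicalSpace F] [IsTopologicalAddGroup F]
    [AddCommGroup E] [Module ℝ E] [TopologicalSpace E]
    (T : F →ₗ[ℝ] E) :
    IsClosed {p : F × E | T p.1 = p.2} ↔
      IsClosed {p : (F ⧸ LinearMap.ker T) × E |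
        (LinearMap.ker T).liftQ T le_rfl p.1 = p.2} := by
  simpa only [Submodule.mkQ_apply, Submodule.liftQ_apply] using
    (LinearMap.ker T).isOpenQuotientMap_mkQ.isClosed_graph_comp_iff
      ((LinearMap.ker T).liftQ T le_rfl)

/-- For a linear map `T : F → E` between topological vector spaces with
kernel `N`, quotient map `φ : F → F/N` and induced map `T̃ : F/N → E` with `T = T̃ ∘ φ`,
the graph of `T` is closed in `F × E` iff the graph of `T̃` is closed in `(F/N) × E`. -/
theorem valdivia_stmt2 {F E : Type*}
    [AddCommGroup F] [Module ℝ F] [TopologicalSpace F] [IsTopologicalAddGroup F]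
    [ContinuousSMul ℝ F]
    [AddCommGroup E] [Module ℝ E] [TopologicalSpace E] [IsTopologicalAddGroup E]
    [ContinuousSMul ℝ E]
    (T : F →ₗ[ℝ] E) :
    IsClosed {p : F × E | T p.1 = p.2} ↔
      IsClosed {p : (F ⧸ LinearMap.ker T) × E |
        (LinearMap.ker T).liftQ T le_rfl p.1 = p.2} :=
  valdivia_stmt2_general T
end

section
/- In the Banach space ℓ¹ of absolutely summable real sequences, every sequence that converges to 0 in the weak topology σ(ℓ¹, ℓ^∞) converges to 0 in norm (Schur's theorem). -/
open Filter Topology Set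

/-!
It suffices to pair with sign patterns `s : ι → Bool`. The pairing of a summable `a` with a sign
pattern is continuous on the compact space `ι → Bool`, so by the Baire category theorem there are
`m` and a cylinder (signs fixed on a finite set `I`) on which every pairing with `a k`, `k ≥ m`, is
at most `ε`. Choosing the free signs equal to, resp. opposite to, the signs of `a k` off `I` bounds
the tail `∑_{i ∉ I} |a k i|` by `ε`. The finitely many coordinates in `I` tend to `0`, since
flipping a single sign changes the pairing by `2 a k i`.
-/

def boolSign (b : Bool) : ℝ := if b then 1 else -1

@[simp]
lemma abs_boolSign (b : Bool) : |boolSign b| = 1 := by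
  cases b <;> simp [boolSign]

lemma mul_boolSign_decide_nonneg (t : ℝ) : t * boolSign (decide (0 ≤ t)) = |t| := by
  rcases le_or_gt 0 t with h | h
  · simp [boolSign, h, abs_of_nonneg h]
  · simp [boolSign, h.not_ge, abs_of_neg h]

lemma mul_boolSign_decide_neg (t : ℝ) : t * boolSign (decide (t < 0)) = -|t| := by
  rcases le_or_gt 0 t with h | h
  · simp [boolSign, h.not_gt, abs_of_nonneg h]
  · simp [boolSign, h, abs_of_neg h]

theorem exists_nonempty_isOpen_forall_abs_le_of_tendsto_zero {X : Type*} [TopologicalSpace X]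
    [BaireSpace X] [Nonempty X] {f : ℕ → X → ℝ} (hf : ∀ k, Continuous (f k))
    (hlim : ∀ x, Tendsto (fun k => f k x) atTop (𝓝 0)) {ε : ℝ} (hε : 0 < ε) :
    ∃ m, ∃ U : Set X, IsOpen U ∧ U.Nonempty ∧ ∀ x ∈ U, ∀ k ≥ m, |f k x| ≤ ε := by
  let F (m : ℕ) : Set X := ⋂ k ≥ m, {x | |f k x| ≤ ε}
  have hclosed (m : ℕ) : IsClosed (F m) :=
    isClosed_biInter fun k _ => isClosed_le (hf k).abs continuous_const
  have hcover : ⋃ m, F m = univ := eq_univ_of_forall fun x => mem_iUnion.2 <| by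
    simpa [F, Real.dist_eq] using
      (Metric.tendsto_atTop.1 (hlim x) ε hε).imp fun m hm k hk => (hm k hk).le
  obtain ⟨m, hm⟩ := nonempty_interior_of_iUnion_of_closed hclosed hcover
  exact ⟨m, interior (F m), isOpen_interior, hm,
    fun x hx => by simpa [F] using interior_subset hx⟩

theorem IsOpen.exists_finset_setOf_eqOn_subset {ι X : Type*} [TopologicalSpace X]
    {U : Set (ι → X)} (hU : IsOpen U) {s₀ : ι → X} (hs₀ : s₀ ∈ U) :
    ∃ I : Finset ι, {s | EqOn s s₀ I} ⊆ U := by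
  obtain ⟨I, u, hu, hsub⟩ := isOpen_pi_iff.1 hU s₀ hs₀
  exact ⟨I, fun s hs => hsub fun i hi => (hs hi).symm ▸ (hu i hi).2⟩

section SignPairing

variable {ι : Type*} {a : ι → ℝ}

noncomputable def signPairing (a : ι → ℝ) (s : ι → Bool) : ℝ :=
  ∑' i, a i * boolSign (s i)

lemma summable_mul_boolSign (ha : Summable fun i => |a i|) (s : ι → Bool) :
    Summable fun i => a i * boolSign (s i) :=
  .of_norm (by simpa [abs_mul] using ha)

lemma continuous_signPairing (ha : Summable fun i => |a i|) : Continuous (signPairing a) :=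
  continuous_tsum (fun i => continuous_const.mul
    ((continuous_of_discreteTopology (f := boolSign)).comp (continuous_apply i))) ha
    fun i s => by simp

lemma signPairing_update_true_sub_update_false [DecidableEq ι] (ha : Summable fun i => |a i|)
    (s : ι → Bool) (j : ι) :
    signPairing a (Function.update s j true) - signPairing a (Function.update s j false)
      = 2 * a j := by
  rw [signPairing, signPairing, ← (summable_mul_boolSign ha _).tsum_sub
    (summable_mul_boolSign ha _), tsum_eq_single j fun i hi => by simp [hi]]
  simp [boolSign]
  ring

lemma tsum_compl_abs_le_of_forall_eqOn (ha : Summable fun i => |a i|) {I : Finset ι}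
    {s₀ : ι → Bool} {δ : ℝ} (h : ∀ s, EqOn s s₀ I → |signPairing a s| ≤ δ) :
    ∑' i : ↥(↑I : Set ι)ᶜ, |a i| ≤ δ := by
  classical
  set head := ∑ i ∈ I, a i * boolSign (s₀ i)
  set tail := ∑' i : ↥(↑I : Set ι)ᶜ, |a i|
  let extend (t : ι → Bool) : ι → Bool := fun i => if i ∈ I then s₀ i else t i
  have hextend (t : ι → Bool) : EqOn (extend t) s₀ I := fun i hi => if_pos hi
  have hsplit (t : ι → Bool) : signPairing a (extend t)
      = head + ∑' i : ↥(↑I : Set ι)ᶜ, a i * boolSign (t i) := by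
    rw [signPairing, ← (summable_mul_boolSign ha _).sum_add_tsum_compl (s := I)]
    congr 1
    · exact Finset.sum_congr rfl fun i hi => by simp [extend, hi]
    · refine tsum_congr fun i => ?_
      have hi : (i : ι) ∉ I := i.2
      simp [extend, hi]
  have hplus : signPairing a (extend fun i => decide (0 ≤ a i)) = head + tail := by
    simp only [hsplit, mul_boolSign_decide_nonneg, tail]
  have hminus : signPairing a (extend fun i => decide (a i < 0)) = head - tail := by
    simp only [hsplit, mul_boolSign_decide_neg, tsum_neg, tail, sub_eq_add_neg]
  have h₁ := h _ (hextend fun i => decide (0 ≤ a i))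
  have h₂ := h _ (hextend fun i => decide (a i < 0))
  rw [hplus] at h₁
  rw [hminus] at h₂
  linarith [le_abs_self (head + tail), neg_abs_le (head - tail)]

theorem tendsto_tsum_abs_zero_of_tendsto_signPairing {a : ℕ → ι → ℝ}
    (ha : ∀ k, Summable fun i => |a k i|)
    (hsign : ∀ s, Tendsto (fun k => signPairing (a k) s) atTop (𝓝 0)) :
    Tendsto (fun k => ∑' i, |a k i|) atTop (𝓝 0) := by
  classical
  have hcoord (j : ι) : Tendsto (fun k => a k j) atTop (𝓝 0) := by
    have h := ((hsign (Function.update (fun _ => true) j true)).sub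
      (hsign (Function.update (fun _ => true) j false))).div_const 2
    simp only [signPairing_update_true_sub_update_false (ha _)] at h
    simpa using h
  refine Metric.tendsto_nhds.2 fun ε hε => ?_
  obtain ⟨m, U, hUo, ⟨s₀, hs₀⟩, hU⟩ :=
    exists_nonempty_isOpen_forall_abs_le_of_tendsto_zero
      (fun k => continuous_signPairing (ha k)) hsign (half_pos hε)
  obtain ⟨I, hI⟩ := IsOpen.exists_finset_setOf_eqOn_subset hUo hs₀
  have hhead : Tendsto (fun k => ∑ i ∈ I, |a k i|) atTop (𝓝 0) := by
    simpa using tendsto_finsetSum I fun j _ => (hcoord j).abs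
  filter_upwards [hhead.eventually (gt_mem_nhds (half_pos hε)),
    eventually_ge_atTop m] with k hk hkm
  have htail := tsum_compl_abs_le_of_forall_eqOn (ha k) fun s hs => hU s (hI hs) k hkm
  rw [Real.dist_eq, sub_zero, abs_of_nonneg (tsum_nonneg fun _ => abs_nonneg _),
    ← (ha k).sum_add_tsum_compl (s := I)]
  linarith

end SignPairing

/-- Schur's theorem: In `ℓ¹`, every sequence converging to `0` in the
weak topology `σ(ℓ¹, ℓ^∞)` (i.e. `∑ xₖ(n) y(n) → 0` for every bounded real sequence
`y`) converges to `0` in norm. -/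
theorem valdivia_stmt4 (x : ℕ → lp (fun _ : ℕ => ℝ) 1)
    (hweak : ∀ y : ℕ → ℝ, (∃ C : ℝ, ∀ n, |y n| ≤ C) →
      Tendsto (fun k => ∑' n : ℕ, (x k : ∀ _ : ℕ, ℝ) n * y n) atTop (nhds 0)) :
    Tendsto (fun k => ‖x k‖) atTop (nhds 0) := by
  have hsum (k : ℕ) : Summable fun n => |(x k : ℕ → ℝ) n| := by
    simpa using (x k).2.summable (by norm_num)
  have hnorm (k : ℕ) : ‖x k‖ = ∑' n, |(x k : ℕ → ℝ) n| := by
    rw [lp.norm_eq_tsum_rpow (by norm_num)]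
    simp
  simp only [hnorm]
  exact tendsto_tsum_abs_zero_of_tendsto_signPairing hsum fun s =>
    hweak _ ⟨1, fun n => (abs_boolSign (s n)).le⟩
end

section
/- Let E be a topological vector space with a sequential web (with strand property Z_{k+1} ⊆ (1/2)•Z_k and compatibility). Then every sequence converging to 0 in E is Mackey-null: for every null sequence (y_n) in E there exists a sequence (d_n) of positive reals with d_n → ∞ such that d_n • y_n → 0 in E. -/
open Filter Set Pointwise

/-!
Take a strand `Z` whose members eventually contain the null sequence `y`, and let `c n → ∞`
be a level such that `y n ∈ Z j` for all `j < c n`. Since `Z (j + m) ⊆ 2⁻ᵐ • Z j`, the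
multiplier `d n = 2 ^ (c n / 2)` moves `y n` from `Z (K + c n / 2)` into `Z K`, and by
compatibility each `Z K` lies in a prescribed `0`-neighborhood.
-/

theorem exists_tendsto_atTop_forall_lt_of_eventually {P : ℕ → ℕ → Prop}
    (hP : ∀ k, ∀ᶠ n in atTop, P k n) :
    ∃ c : ℕ → ℕ, Tendsto c atTop atTop ∧ ∀ n, ∀ j < c n, P j n := by
  have hlt : ∀ k, ∀ᶠ n in atTop, ∀ j ∈ Iio k, P j n := fun k =>
    (eventually_all_finite (finite_Iio k)).2 fun j _ => hP j
  choose N hN using fun k => eventually_atTop.1 (hlt k)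
  refine ⟨fun n => Nat.findGreatest (fun k => N k ≤ n) n, ?_, fun n j hj => ?_⟩
  · refine tendsto_atTop.2 fun k => eventually_atTop.2 ⟨max k (N k), fun n hn => ?_⟩
    exact Nat.le_findGreatest (le_of_max_le_left hn) (le_of_max_le_right hn)
  · have hcn : N (Nat.findGreatest (fun k => N k ≤ n) n) ≤ n :=
      Nat.findGreatest_of_ne_zero (P := fun k => N k ≤ n) rfl (Nat.ne_zero_of_lt hj)
    exact hN _ n hcn j hj

theorem smul_two_pow_mem_of_mem_add {E : Type*} [AddCommGroup E] [Module ℝ E] {Z : ℕ → Set E}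
    (hZ : ∀ k, Z (k + 1) ⊆ ((1 : ℝ) / 2) • Z k) (j m : ℕ) {x : E} (hx : x ∈ Z (j + m)) :
    (2 : ℝ) ^ m • x ∈ Z j := by
  induction m generalizing x with
  | zero => simpa using hx
  | succ m ih =>
    obtain ⟨z, hz, rfl⟩ := hZ (j + m) hx
    have hscale : (2 : ℝ) ^ (m + 1) • ((1 : ℝ) / 2) • z = (2 : ℝ) ^ m • z := by
      rw [smul_smul]; ring_nf
    exact hscale ▸ ih hz

theorem valdivia_stmt9_general {E : Type*} [AddCommGroup E] [Module ℝ E] [TopologicalSpace E]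
    (W : (k : ℕ) → (Fin (k + 1) → ℕ) → Set E)
    (hstrand : ∀ (α : ℕ → ℕ) (k : ℕ),
      W (k + 1) (fun i => α i.1) ⊆ ((1 : ℝ) / 2) • W k (fun i => α i.1))
    (hcomp : ∀ V ∈ nhds (0 : E), ∀ α : ℕ → ℕ, ∃ K, W K (fun i => α i.1) ⊆ V)
    (hseq : ∀ x : ℕ → E, Tendsto x atTop (nhds (0 : E)) →
      ∃ α : ℕ → ℕ, ∀ k, ∃ N, ∀ n ≥ N, x n ∈ W k (fun i => α i.1)) :
    ∀ y : ℕ → E, Tendsto y atTop (nhds (0 : E)) →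
      ∃ d : ℕ → ℝ, (∀ n, 0 < d n) ∧ Tendsto d atTop atTop ∧
        Tendsto (fun n => d n • y n) atTop (nhds (0 : E)) := by
  intro y hy
  obtain ⟨α, hα⟩ := hseq y hy
  obtain ⟨c, hc, hyc⟩ := exists_tendsto_atTop_forall_lt_of_eventually
    (P := fun k n => y n ∈ W k (fun i => α i.1)) fun k => eventually_atTop.2 (hα k)
  refine ⟨fun n => (2 : ℝ) ^ (c n / 2), fun n => by positivity,
    (tendsto_pow_atTop_atTop_of_one_lt one_lt_two).comp
      ((Nat.tendsto_div_const_atTop two_ne_zero).comp hc), tendsto_def.2 fun V hV => ?_⟩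
  obtain ⟨K, hK⟩ := hcomp V hV α
  filter_upwards [hc.eventually_gt_atTop (2 * K)] with n hn
  exact hK (smul_two_pow_mem_of_mem_add (Z := fun k => W k (fun i => α i.1)) (hstrand α) K
    (c n / 2) (hyc n _ (by omega)))

/-- A locally convex space with a sequential web (compatible web of
balanced convex sets whose strands satisfy `W (k+1) ⊆ (1/2)•W k`, and such that every
null sequence is eventually contained in each member of some strand) satisfies the
Mackey convergence condition: for every null sequence `(y n)` there exist positive
reals `d n → ∞` with `d n • y n → 0`. -/
theorem valdivia_stmt9 {E : Type*} [AddCommGroup E] [Module ℝ E] [TopologicalSpace E]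
    [IsTopologicalAddGroup E] [ContinuousSMul ℝ E] [LocallyConvexSpace ℝ E]
    (W : (k : ℕ) → (Fin (k + 1) → ℕ) → Set E)
    (hbal : ∀ k s, Balanced ℝ (W k s))
    (hconv : ∀ k s, Convex ℝ (W k s))
    (hstrand : ∀ (α : ℕ → ℕ) (k : ℕ),
      W (k + 1) (fun i => α i.1) ⊆ ((1 : ℝ) / 2) • W k (fun i => α i.1))
    (hcomp : ∀ V ∈ nhds (0 : E), ∀ α : ℕ → ℕ, ∃ K, W K (fun i => α i.1) ⊆ V)
    (hseq : ∀ x : ℕ → E, Tendsto x atTop (nhds (0 : E)) →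
      ∃ α : ℕ → ℕ, ∀ k, ∃ N, ∀ n ≥ N, x n ∈ W k (fun i => α i.1)) :
    ∀ y : ℕ → E, Tendsto y atTop (nhds (0 : E)) →
      ∃ d : ℕ → ℝ, (∀ n, 0 < d n) ∧ Tendsto d atTop atTop ∧
        Tendsto (fun n => d n • y n) atTop (nhds (0 : E)) :=
  valdivia_stmt9_general W hstrand hcomp hseq
end

section
/- Let E be a topological vector space and (Z_k) a decreasing sequence of balanced convex sets with Z_{k+1} ⊆ (1/2)•Z_k, such that every null sequence (x_n) in E satisfies: for each k there is N_k with x_n ∈ Z_k for all n ≥ N_k. Then for every null sequence (y_n) in E there exists an increasing sequence of positive reals (d_n) with d_n → ∞ such that for every k, d_n • y_n ∈ Z_k for all sufficiently large n. -/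
/-!
Since `Z (k + 1) ⊆ (1/2) • Z k`, a vector of `Z (2c)` can be blown up by `2 ^ c` and still lie
in `Z c`. The null sequence `y` lies eventually in each `Z (2k)`; let `c n` grow slowly enough that
`y n ∈ Z (2 c n)` for large `n`. Then `d n = 2 ^ (c n)` works, because `Z` is decreasing.
-/

open Filter Set Pointwise

lemma subset_pow_smul_of_forall_subset_smul {M E : Type*} [Monoid M] [MulAction M E]
    {Z : ℕ → Set E} {a : M} (h : ∀ k, Z (k + 1) ⊆ a • Z k) (k j : ℕ) :
    Z (k + j) ⊆ a ^ j • Z k := by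
  induction j with
  | zero => simp
  | succ j ih =>
    calc Z (k + (j + 1)) ⊆ a • Z (k + j) := h (k + j)
      _ ⊆ a • a ^ j • Z k := smul_set_mono ih
      _ = a ^ (j + 1) • Z k := by rw [smul_smul, pow_succ']

lemma inv_pow_smul_mem_of_mem_add {G E : Type*} [GroupWithZero G] [MulAction G E]
    {Z : ℕ → Set E} {a : G} (ha : a ≠ 0) (h : ∀ k, Z (k + 1) ⊆ a • Z k) {k j : ℕ} {x : E}
    (hx : x ∈ Z (k + j)) : (a ^ j)⁻¹ • x ∈ Z k :=
  (mem_smul_set_iff_inv_smul_mem₀ (pow_ne_zero j ha) _ _).1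
    (subset_pow_smul_of_forall_subset_smul h k j hx)

lemma exists_monotone_tendsto_atTop_eventually {p : ℕ → ℕ → Prop}
    (hp : ∀ k, ∀ᶠ n in atTop, p k n) :
    ∃ c : ℕ → ℕ, Monotone c ∧ Tendsto c atTop atTop ∧ ∀ᶠ n in atTop, p (c n) n := by
  obtain ⟨φ, hφ, hφp⟩ := extraction_forall_of_eventually fun k =>
    eventually_forall_ge_atTop.2 (hp k)
  let c n := Nat.findGreatest (fun k => φ k ≤ n) n
  have le_c {k n : ℕ} (hn : φ k ≤ n) : k ≤ c n :=
    Nat.le_findGreatest ((hφ.id_le k).trans hn) hn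
  refine ⟨c, fun m n hmn => Nat.findGreatest_mono (fun k hk => hk.trans hmn) hmn,
    tendsto_atTop.2 fun k => eventually_atTop.2 ⟨φ k, fun n => le_c⟩,
    eventually_atTop.2 ⟨φ 0, fun n hn => hφp _ n ?_⟩⟩
  exact Nat.findGreatest_spec (P := fun k => φ k ≤ n) n.zero_le hn

theorem valdivia_stmt16_general {E : Type*} [AddCommGroup E] [Module ℝ E] [TopologicalSpace E]
    (Z : ℕ → Set E)
    (hdec : ∀ k, Z (k + 1) ⊆ Z k)
    (hhalf : ∀ k, Z (k + 1) ⊆ ((1 : ℝ) / 2) • Z k)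
    (hnull : ∀ x : ℕ → E, Tendsto x atTop (nhds (0 : E)) →
      ∀ k, ∃ N, ∀ n ≥ N, x n ∈ Z k) :
    ∀ y : ℕ → E, Tendsto y atTop (nhds (0 : E)) →
      ∃ d : ℕ → ℝ, Monotone d ∧ (∀ n, 0 < d n) ∧ Tendsto d atTop atTop ∧
        ∀ k, ∃ N, ∀ n ≥ N, d n • y n ∈ Z k := by
  intro y hy
  have hZ : Antitone Z := antitone_nat_of_succ_le hdec
  obtain ⟨c, hc_mono, hc_tendsto, hyc⟩ := exists_monotone_tendsto_atTop_eventually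
    (p := fun k n => y n ∈ Z (k + k)) fun k => eventually_atTop.2 (hnull y hy (k + k))
  refine ⟨fun n => 2 ^ c n, (pow_right_mono₀ one_le_two).comp hc_mono, fun n => by positivity,
    (tendsto_pow_atTop_atTop_of_one_lt one_lt_two).comp hc_tendsto, fun k => eventually_atTop.1 ?_⟩
  filter_upwards [hyc, hc_tendsto.eventually_ge_atTop k] with n hyn hkn
  have hblowup := inv_pow_smul_mem_of_mem_add (by norm_num) hhalf hyn
  rw [one_div, inv_pow, inv_inv] at hblowup
  exact hZ hkn hblowup

/-- If `(Z k)` is a decreasing sequence of balanced convex sets with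
`Z (k+1) ⊆ (1/2)•Z k` such that every null sequence is eventually in each `Z k`, then
for every null sequence `(y n)` there is an increasing sequence of positive reals
`d n → ∞` such that for each `k`, `d n • y n ∈ Z k` for all sufficiently large `n`. -/
theorem valdivia_stmt16 {E : Type*} [AddCommGroup E] [Module ℝ E] [TopologicalSpace E]
    [IsTopologicalAddGroup E] [ContinuousSMul ℝ E] [LocallyConvexSpace ℝ E]
    (Z : ℕ → Set E)
    (hbal : ∀ k, Balanced ℝ (Z k)) (hconv : ∀ k, Convex ℝ (Z k))
    (hdec : ∀ k, Z (k + 1) ⊆ Z k)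
    (hhalf : ∀ k, Z (k + 1) ⊆ ((1 : ℝ) / 2) • Z k)
    (hnull : ∀ x : ℕ → E, Tendsto x atTop (nhds (0 : E)) →
      ∀ k, ∃ N, ∀ n ≥ N, x n ∈ Z k) :
    ∀ y : ℕ → E, Tendsto y atTop (nhds (0 : E)) →
      ∃ d : ℕ → ℝ, Monotone d ∧ (∀ n, 0 < d n) ∧ Tendsto d atTop atTop ∧
        ∀ k, ∃ N, ∀ n ≥ N, d n • y n ∈ Z k :=
  valdivia_stmt16_general Z hdec hhalf hnull
end

section
/- Let E be a metrizable locally convex space. Then every precompact (totally bounded) subset of E is contained in the closed absolutely convex hull of a sequence converging to 0 in E. -/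
/-!
Fix an antitone basis `B k` of neighbourhoods of `0` and put `U k = B k ∩ 2^{-(k+2)} • B k`.
Precompactness lets one peel off every `a ∈ A` greedily, `a = r 0`, with each increment
`r k - r (k+1)` taken from a finite set `F k` chosen in advance, independently of `a`, and each
residual `r (k+1)` in `U k`. As `F (k+1) ⊆ U k`, the points of the sets `2^{k+1} • F k` form a null
family, which a single null sequence `y` enumerates, and
`a = ∑ 2^{-(k+1)} • (2^{k+1} • (r k - r (k+1)))` is a limit of subconvex combinations of points
of `range y`.
-/

open Filter Topology Set
open scoped Pointwise Uniformity

theorem exists_seq_of_forall_exists_succ {α : Type*} (P : ℕ → α → Prop) (R : ℕ → α → α → Prop)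
    {x₀ : α} (h₀ : P 0 x₀) (h : ∀ k x, P k x → ∃ x', P (k + 1) x' ∧ R k x x') :
    ∃ x : ℕ → α, x 0 = x₀ ∧ ∀ k, P k (x k) ∧ R k (x k) (x (k + 1)) := by
  have h' : ∀ k x, ∃ x', P k x → P (k + 1) x' ∧ R k x x' := fun k x => by
    by_cases hx : P k x
    · obtain ⟨x', hx'⟩ := h k x hx
      exact ⟨x', fun _ => hx'⟩
    · exact ⟨x, fun h => absurd h hx⟩
  choose next hnext using h'
  let x : ℕ → α := fun n => Nat.rec x₀ next n
  have hP : ∀ k, P k (x k) := fun k => by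
    induction k with
    | zero => exact h₀
    | succ k ih => exact (hnext k (x k) ih).1
  exact ⟨x, rfl, fun k => ⟨hP k, (hnext k (x k) (hP k)).2⟩⟩

section TotallyBounded

variable {E : Type*} [AddCommGroup E] [UniformSpace E] [IsUniformAddGroup E] {s t U : Set E}

theorem TotallyBounded.exists_finite_subset_add_nhds (hs : TotallyBounded s) (hU : U ∈ 𝓝 0) :
    ∃ F ⊆ s, F.Finite ∧ s ⊆ F + U := by
  have hV : {p : E × E | p.1 - p.2 ∈ U} ∈ 𝓤 E := by
    rw [uniformity_eq_comap_nhds_zero_swapped]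
    exact preimage_mem_comap hU
  obtain ⟨F, hFs, hF, hcover⟩ := totallyBounded_iff_subset.mp hs _ hV
  refine ⟨F, hFs, hF, fun a ha => ?_⟩
  obtain ⟨f, hf, hfa⟩ := mem_iUnion₂.mp (hcover ha)
  exact ⟨f, hf, a - f, hfa, add_sub_cancel f a⟩

theorem TotallyBounded.sub_finite (hs : TotallyBounded s) (ht : t.Finite) :
    TotallyBounded (s - t) := by
  rw [← iUnion_sub_right_image]
  exact (totallyBounded_biUnion ht).2 fun f _ =>
    hs.image (uniformContinuous_id.sub uniformContinuous_const)

theorem TotallyBounded.exists_finite_residues {A : Set E} (hA : TotallyBounded A)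
    {U : ℕ → Set E} (hU : ∀ k, U k ∈ 𝓝 0) :
    ∃ F : ℕ → Set E, (∀ k, (F k).Finite) ∧ (∀ k, F (k + 1) ⊆ U k) ∧
      ∀ a ∈ A, ∃ r : ℕ → E, r 0 = a ∧ ∀ k, r k - r (k + 1) ∈ F k ∧ r (k + 1) ∈ U k := by
  have step : ∀ k s, TotallyBounded s → ∃ s', TotallyBounded s' ∧
      s' ⊆ U k ∧ ∃ F ⊆ s, F.Finite ∧ s ⊆ F + s' := fun k s hs => by
    obtain ⟨F, hFs, hF, hsF⟩ := hs.exists_finite_subset_add_nhds (hU k)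
    refine ⟨(s - F) ∩ U k, (hs.sub_finite hF).subset inter_subset_left, inter_subset_right,
      F, hFs, hF, fun x hx => ?_⟩
    obtain ⟨f, hf, u, hu, rfl⟩ := hsF hx
    exact ⟨f, hf, u, ⟨⟨f + u, hx, f, hf, add_sub_cancel_left f u⟩, hu⟩, rfl⟩
  obtain ⟨S, rfl, hS⟩ := exists_seq_of_forall_exists_succ _ _ hA step
  choose F hFS hFfin hcover using fun k => (hS k).2.2
  refine ⟨F, hFfin, fun k => (hFS (k + 1)).trans (hS k).2.1, fun a ha => ?_⟩
  obtain ⟨r, rfl, hr⟩ := exists_seq_of_forall_exists_succ (fun k x => x ∈ S k)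
    (fun k x x' => x - x' ∈ F k) ha fun k x hx => by
      obtain ⟨f, hf, x', hx', rfl⟩ := hcover k hx
      exact ⟨x', hx', by simpa using hf⟩
  exact ⟨r, rfl, fun k => ⟨(hr k).2, (hS k).2.1 (hr (k + 1)).1⟩⟩

end TotallyBounded

theorem Set.Countable.exists_seq_tendsto_subset_range {X : Type*} [TopologicalSpace X]
    {T : Set X} {x : X} (hT : T.Countable) (hnull : ∀ W ∈ 𝓝 x, (T \ W).Finite) :
    ∃ y : ℕ → X, Tendsto y atTop (𝓝 x) ∧ T ⊆ range y := by
  have := hT.to_subtype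
  obtain ⟨e⟩ : Nonempty (ℕ ≃ T ⊕ ℕ) := nonempty_equiv_of_countable
  let g : T ⊕ ℕ → X := Sum.elim (↑) fun _ => x
  refine ⟨g ∘ e, ?_, fun t ht => ⟨e.symm (.inl ⟨t, ht⟩), by simp [g]⟩⟩
  rw [← Nat.cofinite_eq_atTop]
  refine Tendsto.comp (fun W hW => ?_) e.injective.tendsto_cofinite
  have hfin : {t : T | (t : X) ∉ W}.Finite :=
    ((hnull W hW).preimage Subtype.val_injective.injOn).subset fun t ht => ⟨t.2, ht⟩
  refine (hfin.image Sum.inl).subset ?_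
  rintro (t | n) ht
  · exact mem_image_of_mem _ ht
  · exact absurd (mem_of_mem_nhds hW) ht

theorem exists_seq_tendsto_iUnion_subset_range {X : Type*} [TopologicalSpace X]
    {G : ℕ → Set X} {x : X} (hG : ∀ k, (G k).Finite)
    (hlim : Tendsto G atTop (𝓝 x).smallSets) :
    ∃ y : ℕ → X, Tendsto y atTop (𝓝 x) ∧ ⋃ k, G k ⊆ range y := by
  refine (countable_iUnion fun k => (hG k).countable).exists_seq_tendsto_subset_range
    fun W hW => ?_
  obtain ⟨N, hN⟩ := eventually_atTop.mp (tendsto_smallSets_iff.mp hlim W hW)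
  refine ((finite_lt_nat N).biUnion fun k _ => hG k).subset ?_
  rintro z ⟨hz, hzW⟩
  obtain ⟨k, hk⟩ := mem_iUnion.mp hz
  exact mem_biUnion (lt_of_not_ge fun hNk => hzW (hN k hNk hk)) hk

theorem sum_smul_mem_convexHull_of_zero_mem {𝕜 E ι : Type*} [Field 𝕜] [LinearOrder 𝕜]
    [IsStrictOrderedRing 𝕜] [AddCommGroup E] [Module 𝕜 E] {s : Set E} {t : Finset ι}
    {w : ι → 𝕜} {z : ι → E} (h0 : (0 : E) ∈ s) (hw₀ : ∀ i ∈ t, 0 ≤ w i)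
    (hw₁ : ∑ i ∈ t, w i ≤ 1) (hz : ∀ i ∈ t, z i ∈ s) :
    ∑ i ∈ t, w i • z i ∈ convexHull 𝕜 s := by
  rcases (Finset.sum_nonneg hw₀).eq_or_lt with hw | hw
  · rw [Finset.sum_eq_zero fun i hi => by
      rw [(Finset.sum_eq_zero_iff_of_nonneg hw₀).mp hw.symm i hi, zero_smul]]
    exact subset_convexHull 𝕜 s h0
  · have hmass := (convex_convexHull 𝕜 s).smul_mem_of_zero_mem (subset_convexHull 𝕜 s h0)
      (t.centerMass_mem_convexHull hw₀ hw hz) ⟨hw.le, hw₁⟩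
    rwa [Finset.centerMass, smul_smul, mul_inv_cancel₀ hw.ne', one_smul] at hmass

theorem mem_closure_convexHull_of_tendsto_zero {E : Type*} [AddCommGroup E] [Module ℝ E]
    [TopologicalSpace E] [ContinuousSub E] {S : Set E} {r : ℕ → E} (h0 : (0 : E) ∈ S)
    (hr : Tendsto r atTop (𝓝 0)) (hS : ∀ k, (2 : ℝ) ^ (k + 1) • (r k - r (k + 1)) ∈ S) :
    r 0 ∈ closure (convexHull ℝ S) := by
  have hpartial : Tendsto (fun n => ∑ i ∈ Finset.range n, (r i - r (i + 1))) atTop (𝓝 (r 0)) := by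
    have hlim := (tendsto_const_nhds (x := r 0)).sub hr
    rw [sub_zero] at hlim
    exact hlim.congr fun n => (Finset.sum_range_sub' r n).symm
  refine mem_closure_of_tendsto hpartial (Eventually.of_forall fun n => ?_)
  have hweights : ∑ i ∈ Finset.range n, (1 / 2 : ℝ) ^ (i + 1) ≤ 1 := by
    simp only [pow_succ, ← Finset.sum_mul]
    linarith [sum_geometric_two_le n]
  convert sum_smul_mem_convexHull_of_zero_mem h0 (fun i _ => by positivity) hweights
    fun i _ => hS i using 2 with i
  rw [smul_smul, ← mul_pow, one_div_mul_cancel two_ne_zero, one_pow, one_smul]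

theorem valdivia_stmt18_general {E : Type*} [AddCommGroup E] [Module ℝ E] [UniformSpace E]
    [IsUniformAddGroup E] [ContinuousSMul ℝ E]
    [TopologicalSpace.MetrizableSpace E]
    (A : Set E) (hA : TotallyBounded A) :
    ∃ y : ℕ → E, Tendsto y atTop (nhds (0 : E)) ∧
      A ⊆ closure (convexHull ℝ (balancedHull ℝ (Set.range y))) := by
  obtain ⟨B, hB⟩ := (𝓝 (0 : E)).exists_antitone_basis
  have hscale : ∀ k : ℕ, (2 : ℝ) ^ (k + 2) ≠ 0 := fun k => by positivity
  set U : ℕ → Set E := fun k => B k ∩ ((2 : ℝ) ^ (k + 2))⁻¹ • B k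
  have hU : ∀ k, U k ∈ 𝓝 0 := fun k =>
    inter_mem (hB.mem k) ((set_smul_mem_nhds_zero_iff (inv_ne_zero (hscale k))).mpr (hB.mem k))
  obtain ⟨F, hFfin, hFU, hres⟩ := hA.exists_finite_residues hU
  obtain ⟨y, hy, hFy⟩ := exists_seq_tendsto_iUnion_subset_range
    (G := fun k => (2 : ℝ) ^ (k + 1) • F k) (fun k => (hFfin k).smul_set) <| by
      refine (tendsto_add_atTop_iff_nat 1).mp <| hB.tendsto_smallSets.smallSets_mono <|
        Eventually.of_forall fun k => ?_
      rintro _ ⟨x, hx, rfl⟩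
      exact (mem_inv_smul_set_iff₀ (hscale k) _ _).mp (hFU k hx).2
  have hzero : (0 : E) ∈ balancedHull ℝ (range y) :=
    (balancedHull.balanced _).zero_mem ⟨y 0, subset_balancedHull ℝ (mem_range_self 0)⟩
  refine ⟨y, hy, fun a ha => ?_⟩
  obtain ⟨r, rfl, hr⟩ := hres a ha
  exact mem_closure_convexHull_of_tendsto_zero hzero
    ((tendsto_add_atTop_iff_nat 1).mp (hB.tendsto fun k => (hr k).2.1)) fun k =>
      subset_balancedHull ℝ (hFy (mem_iUnion_of_mem k (smul_mem_smul_set (hr k).1)))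

/-- In a metrizable locally convex space, every precompact (totally
bounded) set is contained in the closed absolutely convex hull of a null sequence. -/
theorem valdivia_stmt18 {E : Type*} [AddCommGroup E] [Module ℝ E] [UniformSpace E]
    [IsUniformAddGroup E] [ContinuousSMul ℝ E] [LocallyConvexSpace ℝ E]
    [TopologicalSpace.MetrizableSpace E]
    (A : Set E) (hA : TotallyBounded A) :
    ∃ y : ℕ → E, Tendsto y atTop (nhds (0 : E)) ∧
      A ⊆ closure (convexHull ℝ (balancedHull ℝ (Set.range y))) :=
  valdivia_stmt18_general A hA
end
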